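/- Unconstrained degree identity: let R be a commutative ring, N ≥ 1, n_1,…,n_N ≥ 1 with ν = (n_1,…,n_N), and let z_1,…,z_N be vectors in R^N with z_i = (z_{i,1},…,z_{i,N}). Then A_ν(z_1,…,z_1, z_2,…,z_2, …, z_N,…,z_N), where each z_i is repeated n_i times (so the number of arguments is n_1+⋯+n_N = |ν|), equals Σ ∏_{i=1}^N multinomial(α_{i,1},…,α_{i,N}) ∏_{j=1}^N z_{i,j}^{α_{i,j}}, the sum over all N-tuples (α_1,…,α_N) of vectors in ℕ^N with |α_i| = n_i for each i and α_1+⋯+α_N = ν; equivalently, it equals Σ over the same index set of ∏_{i=1}^N S_{α_i}(z_i). -/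

import Mathlib

/-- `Afun δ z`: for `δ : Fin N → ℕ` with `|δ| = card ι`, the sum over all maps
`σ : ι → Fin N` whose fiber over `j` has cardinality `δ j` of `∏ i, z i (σ i)`.
This is the function `A_δ(z_1, …, z_k)` of the paper. -/
def Afun {R : Type*} [CommSemiring R] {ι : Type*} [Fintype ι] [DecidableEq ι]
    {N : ℕ} (δ : Fin N → ℕ) (z : ι → Fin N → R) : R :=
  ∑ σ ∈ Finset.univ.filter
      (fun σ : ι → Fin N => ∀ j, (Finset.univ.filter fun i => σ i = j).card = δ j),
    ∏ i, z i (σ i)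

/-- `Sfun δ z`: the sum over all `N × ι` matrices `B` of naturals whose `i`-th row sums
to `δ i` of `∏ j, multinomial(B_{1j},…,B_{Nj}) * ∏ i, (z j i) ^ (B i j)`.
This is the function `S_δ(z_1, …, z_s)` of the paper. -/
def Sfun {R : Type*} [CommSemiring R] {ι : Type*} [Fintype ι] [DecidableEq ι]
    {N : ℕ} (δ : Fin N → ℕ) (z : ι → Fin N → R) : R :=
  ∑ B ∈ Finset.univ.filter
      (fun B : ∀ i : Fin N, ι → Fin (δ i + 1) => ∀ i, (∑ j, ((B i j : ℕ))) = δ i),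
    ∏ j : ι, ((Nat.multinomial Finset.univ fun i : Fin N => (B i j : ℕ)) : R)
      * ∏ i : Fin N, z j i ^ ((B i j : ℕ))

/-!
Both sides are the coefficient of `X^ν` in `∏ᵢ (∑ⱼ zᵢⱼ Xⱼ)^{nᵢ}`. Read as a product of `|ν|`
linear forms, one for each argument of `A_ν`, and expanded term by term, this coefficient is
`A_ν`. Expanding each power by the multinomial theorem instead gives a sum over matrices `α`
with row sums `nᵢ`, and taking the coefficient of `X^ν` keeps those with column sums `ν`.
-/

open Finset MvPolynomial

section
variable {R σ ι : Type*} [CommSemiring R] [Fintype σ] [Fintype ι]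

noncomputable def linearForm (v : σ → R) : MvPolynomial σ R :=
  ∑ j, C (v j) * X j

lemma coeff_C_mul_prod_X_pow [DecidableEq σ] (d : σ →₀ ℕ) (c : R) (g : σ → ℕ) :
    coeff d (C c * ∏ j, X j ^ g j) = if ∀ j, g j = d j then c else 0 := by
  rw [coeff_C_mul, coeff_prod_X_pow]
  simp [Finsupp.ext_iff, eq_comm]

lemma prod_C_mul_X_eq_C_mul_prod_X_pow_card [DecidableEq σ] (z : ι → σ → R) (f : ι → σ) :
    ∏ p, C (z p (f p)) * X (f p) =
      C (∏ p, z p (f p)) * ∏ j, (X j : MvPolynomial σ R) ^ #{p | f p = j} := by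
  simp only [prod_mul_distrib, map_prod, ← prod_fiberwise' univ f X, prod_const]

lemma coeff_prod_linearForm [DecidableEq ι] [DecidableEq σ] (d : σ →₀ ℕ) (z : ι → σ → R) :
    coeff d (∏ p, linearForm (z p)) =
      ∑ f : ι → σ with ∀ j, #{p | f p = j} = d j, ∏ p, z p (f p) := by
  simp only [linearForm, prod_univ_sum, Fintype.piFinset_univ, coeff_sum,
    prod_C_mul_X_eq_C_mul_prod_X_pow_card, coeff_C_mul_prod_X_pow, sum_filter]

lemma coeff_prod_linearForm_eq_Afun [DecidableEq ι] {N : ℕ} (δ : Fin N → ℕ)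
    (z : ι → Fin N → R) :
    coeff (Finsupp.equivFunOnFinite.symm δ) (∏ p, linearForm (z p)) = Afun δ z := by
  rw [coeff_prod_linearForm, Afun]
  -- the two filters differ only in their `Decidable` instances
  exact sum_congr (filter_congr_decidable _ _ _) fun _ _ => rfl

lemma linearForm_pow [DecidableEq σ] (v : σ → R) (n : ℕ) :
    linearForm v ^ n = ∑ k ∈ piAntidiag univ n,
      C (Nat.multinomial univ k * ∏ j, v j ^ k j) * ∏ j, X j ^ k j := by
  rw [linearForm, sum_pow_eq_sum_piAntidiag]
  refine sum_congr rfl fun k _ => ?_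
  simp only [map_mul, map_natCast, map_prod, map_pow, mul_pow, prod_mul_distrib, mul_assoc]

lemma prod_C_mul_prod_X_pow_eq_C_mul_prod_X_pow_sum (a : ι → R) (K : ι → σ → ℕ) :
    ∏ i, C (a i) * ∏ j, X j ^ K i j =
      C (∏ i, a i) * ∏ j, (X j : MvPolynomial σ R) ^ ∑ i, K i j := by
  rw [prod_mul_distrib, ← map_prod, prod_comm]
  simp only [prod_pow_eq_pow_sum]

lemma coeff_prod_linearForm_pow [DecidableEq ι] [DecidableEq σ] (n : ι → ℕ) (z : ι → σ → R)
    (d : σ →₀ ℕ) :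
    coeff d (∏ i, linearForm (z i) ^ n i) =
      ∑ K ∈ Fintype.piFinset (fun i => piAntidiag univ (n i)) with ∀ j, ∑ i, K i j = d j,
        ∏ i, (Nat.multinomial univ (K i) * ∏ j, z i j ^ K i j) := by
  simp only [linearForm_pow, prod_univ_sum, coeff_sum,
    prod_C_mul_prod_X_pow_eq_C_mul_prod_X_pow_sum, coeff_C_mul_prod_X_pow, sum_filter]

end

lemma sum_filter_piFinset_piAntidiag_eq_sum_fin {M ι σ : Type*} [AddCommMonoid M]
    [Fintype ι] [Fintype σ] [DecidableEq ι] [DecidableEq σ] (r : ι → ℕ) (c : σ → ℕ)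
    (f : (ι → σ → ℕ) → M) :
    ∑ K ∈ Fintype.piFinset (fun i => piAntidiag univ (r i)) with ∀ j, ∑ i, K i j = c j, f K =
      ∑ α : ι → ∀ j, Fin (c j + 1) with
          (∀ i, ∑ j, (α i j : ℕ) = r i) ∧ ∀ j, ∑ i, (α i j : ℕ) = c j,
        f fun i j => α i j := by
  refine sum_bij' (fun K hK i j => ⟨K i j, ?_⟩) (fun α _ i j => α i j) ?_ ?_
    (fun _ _ => rfl) (fun _ _ => rfl) (fun _ _ => rfl)
  · have hcol := (mem_filter.1 hK).2 j
    have := single_le_sum (f := fun i' => K i' j) (fun _ _ => Nat.zero_le _) (mem_univ i)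
    omega
  · intro K hK
    simp only [mem_filter, Fintype.mem_piFinset, mem_piAntidiag] at hK ⊢
    exact ⟨mem_univ _, fun i => (hK.1 i).1, hK.2⟩
  · intro α hα
    simp only [mem_filter, Fintype.mem_piFinset, mem_piAntidiag] at hα ⊢
    exact ⟨fun i => ⟨hα.2.1 i, fun j _ => mem_univ j⟩, hα.2.2⟩

lemma Sfun_fin_one {R : Type*} [CommSemiring R] {N : ℕ} (δ : Fin N → ℕ) (v : Fin N → R) :
    Sfun δ (fun _ : Fin 1 => v) = Nat.multinomial univ δ * ∏ j, v j ^ δ j := by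
  rw [Sfun, sum_eq_single_of_mem (fun i _ => Fin.last (δ i)) (by simp)]
  · rw [Fin.prod_univ_one]
    rfl
  · intro B hB hne
    refine absurd (funext fun i => funext fun j => ?_) hne
    simpa [Fin.ext_iff, Subsingleton.elim j 0] using (mem_filter.1 hB).2 i

theorem stmt18_general (R : Type*) [CommRing R] (N : ℕ) (nn : Fin N → ℕ)
    (z : Fin N → Fin N → R) :
    (Afun nn (fun p : Σ i : Fin N, Fin (nn i) => z p.1) =
      ∑ α ∈ Finset.univ.filter
          (fun α : Fin N → ∀ j : Fin N, Fin (nn j + 1) =>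
            (∀ i : Fin N, (∑ j, ((α i j : ℕ))) = nn i) ∧
            (∀ j : Fin N, (∑ i, ((α i j : ℕ))) = nn j)),
        ∏ i : Fin N,
          ((Nat.multinomial Finset.univ fun j : Fin N => (α i j : ℕ)) : R)
            * ∏ j : Fin N, z i j ^ ((α i j : ℕ))) ∧
    (Afun nn (fun p : Σ i : Fin N, Fin (nn i) => z p.1) =
      ∑ α ∈ Finset.univ.filter
          (fun α : Fin N → ∀ j : Fin N, Fin (nn j + 1) =>
            (∀ i : Fin N, (∑ j, ((α i j : ℕ))) = nn i) ∧
            (∀ j : Fin N, (∑ i, ((α i j : ℕ))) = nn j)),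
        ∏ i : Fin N,
          Sfun (fun j => ((α i j : ℕ))) (fun _ : Fin 1 => z i)) := by
  have hA : Afun nn (fun p : Σ i : Fin N, Fin (nn i) => z p.1) =
      coeff (Finsupp.equivFunOnFinite.symm nn) (∏ i, linearForm (z i) ^ nn i) := by
    rw [← coeff_prod_linearForm_eq_Afun, Fintype.prod_sigma]
    simp only [prod_const, card_univ, Fintype.card_fin]
  have hB : coeff (Finsupp.equivFunOnFinite.symm nn) (∏ i, linearForm (z i) ^ nn i) =
      ∑ α : Fin N → ∀ j : Fin N, Fin (nn j + 1) with
          (∀ i, ∑ j, (α i j : ℕ) = nn i) ∧ ∀ j, ∑ i, (α i j : ℕ) = nn j,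
        ∏ i, (Nat.multinomial univ (fun j => (α i j : ℕ)) * ∏ j, z i j ^ (α i j : ℕ)) := by
    rw [coeff_prod_linearForm_pow]
    convert sum_filter_piFinset_piAntidiag_eq_sum_fin nn nn _
    rfl
  refine ⟨hA.trans hB, hA.trans <| hB.trans <| sum_congr rfl fun α _ => ?_⟩
  exact prod_congr rfl fun i _ => (Sfun_fin_one _ _).symm

/-- unconstrained degree identity: for a commutative ring `R`,
block sizes `ν = (nn 1, …, nn N)` with `nn i ≥ 1`, and vectors `z_1, …, z_N ∈ R^N`,
the value `A_ν(z_1, …, z_1, …, z_N, …, z_N)` (each `z_i` repeated `nn i` times) equals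
`Σ ∏_i multinomial(α_i) ∏_j z_{i,j}^{α_{i,j}}`, summed over all tuples `(α_1, …, α_N)`
in `ℕ^N` with `|α_i| = nn i` and `α_1 + ⋯ + α_N = ν`; equivalently, it equals
`Σ ∏_i S_{α_i}(z_i)` over the same index set. -/
theorem stmt18 (R : Type*) [CommRing R] (N : ℕ) (hN : 0 < N) (nn : Fin N → ℕ)
    (hnn : ∀ i, 1 ≤ nn i) (z : Fin N → Fin N → R) :
    (Afun nn (fun p : Σ i : Fin N, Fin (nn i) => z p.1) =
      ∑ α ∈ Finset.univ.filter
          (fun α : Fin N → ∀ j : Fin N, Fin (nn j + 1) =>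
            (∀ i : Fin N, (∑ j, ((α i j : ℕ))) = nn i) ∧
            (∀ j : Fin N, (∑ i, ((α i j : ℕ))) = nn j)),
        ∏ i : Fin N,
          ((Nat.multinomial Finset.univ fun j : Fin N => (α i j : ℕ)) : R)
            * ∏ j : Fin N, z i j ^ ((α i j : ℕ))) ∧
    (Afun nn (fun p : Σ i : Fin N, Fin (nn i) => z p.1) =
      ∑ α ∈ Finset.univ.filter
          (fun α : Fin N → ∀ j : Fin N, Fin (nn j + 1) =>
            (∀ i : Fin N, (∑ j, ((α i j : ℕ))) = nn i) ∧
            (∀ j : Fin N, (∑ i, ((α i j : ℕ))) = nn j)),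
        ∏ i : Fin N,
          Sfun (fun j => ((α i j : ℕ))) (fun _ : Fin 1 => z i)) :=
  stmt18_general R N nn z
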